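/- Let V : [0,∞) → ℝ be continuous, λ < 0, γ ∈ ℝ, and let φ : [0,∞) → ℝ be twice continuously differentiable satisfying −φ'' + Vφ = λφ on [0,∞). Set Φ(x) = 1 + γ∫₀ˣ φ(t)² dt and assume Φ(x) > 0 for all x ≥ 0, and let G(x) = γφ(x)²/Φ(x). Then for all x ≥ 0, G'(x)(G'(x) − V(x)) equals the derivative at x of the function x ↦ |λ|G(x) − (γφ'(x)²Φ(x)² − γ²φ'(x)φ(x)³Φ(x) + (1/3)γ³φ(x)⁶)/Φ(x)³. -/

import Mathlib

/-!
With `Φ' = γ φ²` and `φ'' = (V - λ) φ`, the quotient rule gives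
`G' = 2γφφ'/Φ - γ²φ⁴/Φ²`, and a direct computation shows that
`W = (γφ'²Φ² - γ²φ'φ³Φ + γ³φ⁶/3)/Φ³` satisfies `W' = (V - λ) G' - G'²`.
Hence `(|λ| G - W)' = -λ G' - (V - λ) G' + G'² = G' (G' - V)`.
No step divides by `φ`, so the identity survives at the zeros of `φ`.
-/

open MeasureTheory Set

/-- One-sided derivative on `[0, ∞)`. -/
noncomputable def D (f : ℝ → ℝ) : ℝ → ℝ := derivWithin f (Set.Ici 0)

theorem hasDerivWithinAt_integral_Ici {E : Type*} [NormedAddCommGroup E] [NormedSpace ℝ E]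
    [CompleteSpace E] {f : ℝ → E} {a x : ℝ} (hf : ContinuousOn f (Ici a)) (hx : x ∈ Ici a) :
    HasDerivWithinAt (fun y => ∫ t in a..y, f t) (f x) (Ici a) x := by
  have hxIcc : Fact (x ∈ Icc a (x + 1)) := ⟨⟨hx, by linarith⟩⟩
  have hf' : ContinuousOn f (Icc a (x + 1)) := hf.mono Icc_subset_Ici_self
  have h := intervalIntegral.integral_hasDerivWithinAt_right (s := Icc a (x + 1))
    ((hf.mono Icc_subset_Ici_self).intervalIntegrable_of_Icc hx)
    (hf'.stronglyMeasurableAtFilter_nhdsWithin measurableSet_Icc x) (hf' x hxIcc.out)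
  rwa [← Ici_inter_Iic, hasDerivWithinAt_inter (Iic_mem_nhds (by linarith))] at h

section Quotients

/-- `G'` for `G = γ φ² / Φ` with `Φ' = γ φ²`, at a point where `φ = a`, `φ' = b`. -/
noncomputable def sqDivDeriv (γ a b Φ : ℝ) : ℝ := 2 * γ * a * b / Φ - γ ^ 2 * a ^ 4 / Φ ^ 2

variable {φ φ' Φ : ℝ → ℝ} {s : Set ℝ} {x γ : ℝ}

theorem hasDerivWithinAt_sq_div (hφ : HasDerivWithinAt φ (φ' x) s x)
    (hΦ : HasDerivWithinAt Φ (γ * φ x ^ 2) s x) (hΦx : Φ x ≠ 0) :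
    HasDerivWithinAt (fun y => γ * φ y ^ 2 / Φ y)
      (sqDivDeriv γ (φ x) (φ' x) (Φ x)) s x := by
  refine (((hφ.fun_pow 2).const_mul γ).fun_div hΦ hΦx).congr_deriv ?_
  rw [sqDivDeriv]
  field_simp
  ring

theorem hasDerivWithinAt_sq_div_correction {μ : ℝ} (hφ : HasDerivWithinAt φ (φ' x) s x)
    (hφ' : HasDerivWithinAt φ' (μ * φ x) s x) (hΦ : HasDerivWithinAt Φ (γ * φ x ^ 2) s x)
    (hΦx : Φ x ≠ 0) :
    HasDerivWithinAt
      (fun y => (γ * φ' y ^ 2 * Φ y ^ 2 - γ ^ 2 * φ' y * φ y ^ 3 * Φ y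
        + 1/3 * γ ^ 3 * φ y ^ 6) / Φ y ^ 3)
      (μ * sqDivDeriv γ (φ x) (φ' x) (Φ x)
        - sqDivDeriv γ (φ x) (φ' x) (Φ x) ^ 2) s x := by
  have hnum := ((((hφ'.fun_pow 2).const_mul γ).fun_mul (hΦ.fun_pow 2)).fun_sub
    (((hφ'.const_mul (γ ^ 2)).fun_mul (hφ.fun_pow 3)).fun_mul hΦ)).fun_add
    ((hφ.fun_pow 6).const_mul (1/3 * γ ^ 3))
  refine (hnum.fun_div (hΦ.fun_pow 3) (pow_ne_zero 3 hΦx)).congr_deriv ?_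
  rw [sqDivDeriv]
  field_simp
  ring

end Quotients

theorem hasDerivWithinAt_D {f : ℝ → ℝ} {x : ℝ} (hf : ContDiffOn ℝ 1 f (Ici 0))
    (hx : x ∈ Ici 0) : HasDerivWithinAt f (D f x) (Ici 0) x :=
  (hf.differentiableOn one_ne_zero x hx).hasDerivWithinAt

theorem antiderivative_identity_general
    (V φ : ℝ → ℝ) (lam γ : ℝ) (hlam : lam < 0)
    (hφ : ContDiffOn ℝ 2 φ (Set.Ici 0))
    (hφode : ∀ x ∈ Set.Ici (0:ℝ), -(D (D φ) x) + V x * φ x = lam * φ x)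
    (Φ : ℝ → ℝ) (hΦ : ∀ x, Φ x = 1 + γ * ∫ t in (0:ℝ)..x, (φ t) ^ 2)
    (hΦpos : ∀ x ∈ Set.Ici (0:ℝ), 0 < Φ x)
    (G : ℝ → ℝ) (hG : ∀ x, G x = γ * (φ x) ^ 2 / Φ x) :
    ∀ x ∈ Set.Ici (0:ℝ),
      D G x * (D G x - V x) =
        D (fun y => |lam| * G y -
          (γ * (D φ y) ^ 2 * (Φ y) ^ 2 - γ ^ 2 * D φ y * (φ y) ^ 3 * Φ y
            + 1/3 * γ ^ 3 * (φ y) ^ 6) / (Φ y) ^ 3) x := by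
  intro x hx
  have hφd := hasDerivWithinAt_D (hφ.of_le (by norm_num)) hx
  have hφ'd : HasDerivWithinAt (D φ) ((V x - lam) * φ x) (Ici 0) x := by
    convert hasDerivWithinAt_D (f := D φ)
      (hφ.derivWithin (uniqueDiffOn_Ici 0) (by norm_num)) hx using 1
    linarith [hφode x hx]
  have hΦd : HasDerivWithinAt Φ (γ * φ x ^ 2) (Ici 0) x := by
    rw [funext hΦ]
    exact ((hasDerivWithinAt_integral_Ici (hφ.continuousOn.pow 2) hx).const_mul γ).const_add 1
  have hΦx := (hΦpos x hx).ne'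
  have hGd := hasDerivWithinAt_sq_div hφd hΦd hΦx
  rw [← funext hG] at hGd
  have hWd := hasDerivWithinAt_sq_div_correction hφd hφ'd hΦd hΦx
  have hunique := uniqueDiffOn_Ici (0:ℝ) x hx
  rw [D, D, hGd.derivWithin hunique, ((hGd.const_mul |lam|).fun_sub hWd).derivWithin hunique,
    abs_of_neg hlam]
  ring

/-- Explicit antiderivative of `G'(G' - V)` (Remark 3 of the paper), valid even
when the eigenfunction `φ` has zeros. -/
theorem antiderivative_identity
    (V φ : ℝ → ℝ) (lam γ : ℝ) (hlam : lam < 0)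
    (hV : ContinuousOn V (Set.Ici 0))
    (hφ : ContDiffOn ℝ 2 φ (Set.Ici 0))
    (hφode : ∀ x ∈ Set.Ici (0:ℝ), -(D (D φ) x) + V x * φ x = lam * φ x)
    (Φ : ℝ → ℝ) (hΦ : ∀ x, Φ x = 1 + γ * ∫ t in (0:ℝ)..x, (φ t) ^ 2)
    (hΦpos : ∀ x ∈ Set.Ici (0:ℝ), 0 < Φ x)
    (G : ℝ → ℝ) (hG : ∀ x, G x = γ * (φ x) ^ 2 / Φ x) :
    ∀ x ∈ Set.Ici (0:ℝ),
      D G x * (D G x - V x) =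
        D (fun y => |lam| * G y -
          (γ * (D φ y) ^ 2 * (Φ y) ^ 2 - γ ^ 2 * D φ y * (φ y) ^ 3 * Φ y
            + 1/3 * γ ^ 3 * (φ y) ^ 6) / (Φ y) ^ 3) x :=
  antiderivative_identity_general V φ lam γ hlam hφ hφode Φ hΦ hΦpos G hG
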